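/- arXiv:0711.3642 — 2 statements merged into one kernel-verified Lean document; each statement's English description precedes it below -/
import Mathlib

section
/- Let (q, α) and (q′, α′) be right comonad-morphisms from 𝔇 = (B, d, Δ_d, ε_d) to 𝔠 = (A, c, Δ_c, ε_c) in a 2-category. There is a bijective correspondence between: (i) 2-cells σ : d ∘ q ⟶ q′ satisfying α′ ∘ (d ◁ σ) ∘ (Δ_d ▷ q) = (σ ▷ c) ∘ (d ◁ α) ∘ (Δ_d ▷ q), and (iii) morphisms of 𝔇-𝔠-bicomodules σ̂ : d ∘ q ⟶ d ∘ q′. The correspondence sends σ to σ̂ = (d ◁ σ) ∘ (Δ_d ▷ q) and σ̂ to σ = (ε_d ▷ q′) ∘ σ̂. -/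
open CategoryTheory CategoryTheory.Bicategory CategoryTheory.Limits

universe w v u

variable {𝒷 : Type u} [Bicategory.{w, v} 𝒷]

/-- A comonad in a bicategory `𝒷`, consisting of a 0-cell `a`, a 1-cell `c : a ⟶ a`
and 2-cells `Δ : c ⟶ c ≫ c`, `ε : c ⟶ 𝟙 a` satisfying the coassociativity and
counit axioms (up to the associator and unitors). -/
structure Cmnd (a : 𝒷) where
  c : a ⟶ a
  Δ' : c ⟶ c ≫ c
  ε' : c ⟶ 𝟙 a
  coassoc : Δ' ≫ Δ' ▷ c ≫ (α_ c c c).hom = Δ' ≫ c ◁ Δ'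
  counit_left : Δ' ≫ ε' ▷ c ≫ (λ_ c).hom = 𝟙 c
  counit_right : Δ' ≫ c ◁ ε' ≫ (ρ_ c).hom = 𝟙 c

/-- A right comonad-morphism `(q, α)` from the comonad `D` (over `b`) to the comonad `C`
(over `a`): `α : d ≫ q ⟶ q ≫ c` is compatible with the comultiplications and counits. -/
def IsRightComonadMorphism {a b : 𝒷} (D : Cmnd b) (C : Cmnd a)
    (q : b ⟶ a) (α : D.c ≫ q ⟶ q ≫ C.c) : Prop :=
  (α ≫ q ◁ C.Δ' ≫ (α_ q C.c C.c).inv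
      = D.Δ' ▷ q ≫ (α_ D.c D.c q).hom ≫ D.c ◁ α ≫ (α_ D.c q C.c).inv ≫ α ▷ C.c) ∧
  (α ≫ q ◁ C.ε' ≫ (ρ_ q).hom = D.ε' ▷ q ≫ (λ_ q).hom)

/-- A left comonad-morphism `(p, β)` from the comonad `D` (over `b`) to the comonad `C`
(over `a`): `β : p ≫ d ⟶ c ≫ p` is compatible with the comultiplications and counits. -/
def IsLeftComonadMorphism {a b : 𝒷} (D : Cmnd b) (C : Cmnd a)
    (p : a ⟶ b) (β : p ≫ D.c ⟶ C.c ≫ p) : Prop :=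
  (p ◁ D.Δ' ≫ (α_ p D.c D.c).inv ≫ β ▷ D.c ≫ (α_ C.c p D.c).hom ≫ C.c ◁ β ≫
      (α_ C.c C.c p).inv = β ≫ C.Δ' ▷ p) ∧
  (β ≫ C.ε' ▷ p ≫ (λ_ p).hom = p ◁ D.ε' ≫ (ρ_ p).hom)

/-- `m : b ⟶ a` together with a left `D`-coaction `lam` and a right `C`-coaction `rho`
is a `D`-`C`-bicomodule: both coactions are coassociative and counital and compatible. -/
def IsBicomodule {a b : 𝒷} (D : Cmnd b) (C : Cmnd a) (m : b ⟶ a)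
    (lam : m ⟶ D.c ≫ m) (rho : m ⟶ m ≫ C.c) : Prop :=
  (lam ≫ D.Δ' ▷ m ≫ (α_ D.c D.c m).hom = lam ≫ D.c ◁ lam) ∧
  (lam ≫ D.ε' ▷ m ≫ (λ_ m).hom = 𝟙 m) ∧
  (rho ≫ m ◁ C.Δ' ≫ (α_ m C.c C.c).inv = rho ≫ rho ▷ C.c) ∧
  (rho ≫ m ◁ C.ε' ≫ (ρ_ m).hom = 𝟙 m) ∧
  (rho ≫ lam ▷ C.c ≫ (α_ D.c m C.c).hom = lam ≫ D.c ◁ rho)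

variable {a b : 𝒷} (D : Cmnd b) (C : Cmnd a)

/-- Condition (i) of the Lemma: a 2-cell `σ : d ≫ q ⟶ q'` such that
`α' ∘ (d ◁ σ) ∘ (Δ_d ▷ q) = (σ ▷ c) ∘ (d ◁ α) ∘ (Δ_d ▷ q)`. -/
def SigmaCond (q q' : b ⟶ a) (α : D.c ≫ q ⟶ q ≫ C.c) (α' : D.c ≫ q' ⟶ q' ≫ C.c)
    (σ : D.c ≫ q ⟶ q') : Prop :=
  D.Δ' ▷ q ≫ (α_ D.c D.c q).hom ≫ D.c ◁ σ ≫ α'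
    = D.Δ' ▷ q ≫ (α_ D.c D.c q).hom ≫ D.c ◁ α ≫ (α_ D.c q C.c).inv ≫ σ ▷ C.c

/-- A morphism of `D`-`C`-bicomodules `d ≫ q ⟶ d ≫ q'`, where both carry the bicomodule
structures induced by the right comonad-morphisms `(q, α)` and `(q', α')`. -/
def IsBicomoduleMor (q q' : b ⟶ a) (α : D.c ≫ q ⟶ q ≫ C.c) (α' : D.c ≫ q' ⟶ q' ≫ C.c)
    (φ : D.c ≫ q ⟶ D.c ≫ q') : Prop :=
  (φ ≫ (D.Δ' ▷ q' ≫ (α_ D.c D.c q').hom)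
      = (D.Δ' ▷ q ≫ (α_ D.c D.c q).hom) ≫ D.c ◁ φ) ∧
  (φ ≫ (D.Δ' ▷ q' ≫ (α_ D.c D.c q').hom ≫ D.c ◁ α' ≫ (α_ D.c q' C.c).inv)
      = (D.Δ' ▷ q ≫ (α_ D.c D.c q).hom ≫ D.c ◁ α ≫ (α_ D.c q C.c).inv) ≫ φ ▷ C.c)

/-! Coassociativity and counitality of `Δ_d` make `d ≫ q` the cofree left `d`-comodule on `q`:
a 2-cell `σ : d ≫ q ⟶ q'` coextends to the left-colinear `σ̂ = (d ◁ σ) ∘ (Δ_d ▷ q)` with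
`(ε_d ▷ q') ∘ σ̂ = σ`, and every left-colinear `φ` is the coextension of `(ε_d ▷ q') ∘ φ`.
The right coactions are coextensions of `α`, `α'`; since coextension turns co-Kleisli
composition into composition and commutes with right whiskering, right colinearity of `σ̂`
is the coextension of condition (i), and applying the counit gives (i) back. -/

namespace Cmnd

variable {x y : b ⟶ a}

def coact (q : b ⟶ a) : D.c ≫ q ⟶ D.c ≫ D.c ≫ q :=
  D.Δ' ▷ q ≫ (α_ D.c D.c q).hom

def counitAt (q : b ⟶ a) : D.c ≫ q ⟶ q :=
  D.ε' ▷ q ≫ (λ_ q).hom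

def coextend {q q' : b ⟶ a} (σ : D.c ≫ q ⟶ q') : D.c ≫ q ⟶ D.c ≫ q' :=
  D.Δ' ▷ q ≫ (α_ D.c D.c q).hom ≫ D.c ◁ σ

lemma coact_comp_whiskerLeft {q q' : b ⟶ a} (σ : D.c ≫ q ⟶ q') :
    D.coact q ≫ D.c ◁ σ = D.coextend σ :=
  Category.assoc _ _ _

lemma whiskerLeft_comp_coact (f : x ⟶ y) :
    D.c ◁ f ≫ D.coact y = D.coact x ≫ D.c ◁ D.c ◁ f := by
  simp only [coact, whisker_exchange_assoc]
  bicategory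

lemma whiskerLeft_comp_counitAt (f : x ⟶ y) :
    D.c ◁ f ≫ D.counitAt y = D.counitAt x ≫ f := by
  simp only [counitAt, whisker_exchange_assoc]
  bicategory

lemma coact_comp_coact (q : b ⟶ a) :
    D.coact q ≫ D.coact (D.c ≫ q) = D.coact q ≫ D.c ◁ D.coact q := by
  have h := congrArg (· ▷ q) D.coassoc
  simp only [comp_whiskerRight] at h
  calc D.coact q ≫ D.coact (D.c ≫ q)
      = (D.Δ' ▷ q ≫ (D.Δ' ▷ D.c) ▷ q ≫ (α_ D.c D.c D.c).hom ▷ q) ≫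
          (α_ D.c (D.c ≫ D.c) q).hom ≫ D.c ◁ (α_ D.c D.c q).hom := by
        simp only [coact]; bicategory
    _ = (D.Δ' ▷ q ≫ (D.c ◁ D.Δ') ▷ q) ≫
          (α_ D.c (D.c ≫ D.c) q).hom ≫ D.c ◁ (α_ D.c D.c q).hom := by rw [h]
    _ = D.coact q ≫ D.c ◁ D.coact q := by simp only [coact]; bicategory

lemma coact_comp_counitAt (q : b ⟶ a) : D.coact q ≫ D.counitAt (D.c ≫ q) = 𝟙 _ :=
  calc D.coact q ≫ D.counitAt (D.c ≫ q) = (D.Δ' ≫ D.ε' ▷ D.c ≫ (λ_ D.c).hom) ▷ q := by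
        simp only [coact, counitAt]; bicategory
    _ = 𝟙 _ := by rw [D.counit_left, id_whiskerRight]

lemma coact_comp_whiskerLeft_counitAt (q : b ⟶ a) :
    D.coact q ≫ D.c ◁ D.counitAt q = 𝟙 _ :=
  calc D.coact q ≫ D.c ◁ D.counitAt q = (D.Δ' ≫ D.c ◁ D.ε' ≫ (ρ_ D.c).hom) ▷ q := by
        simp only [coact, counitAt]; bicategory
    _ = 𝟙 _ := by rw [D.counit_right, id_whiskerRight]

lemma associator_inv_comp_counitAt_whiskerRight {e : 𝒷} (q : b ⟶ a) (r : a ⟶ e) :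
    (α_ D.c q r).inv ≫ D.counitAt q ▷ r = D.counitAt (q ≫ r) := by
  simp only [counitAt]; bicategory

variable {q q' q'' : b ⟶ a}

lemma coextend_comp_counitAt (σ : D.c ≫ q ⟶ q') : D.coextend σ ≫ D.counitAt q' = σ := by
  rw [← coact_comp_whiskerLeft, Category.assoc, whiskerLeft_comp_counitAt,
    reassoc_of% coact_comp_counitAt]

lemma coextend_comp_coact (σ : D.c ≫ q ⟶ q') :
    D.coextend σ ≫ D.coact q' = D.coact q ≫ D.c ◁ D.coextend σ := by
  rw [← coact_comp_whiskerLeft, Category.assoc, whiskerLeft_comp_coact,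
    reassoc_of% coact_comp_coact, ← whiskerLeft_comp, coact_comp_whiskerLeft]

lemma coextend_comp_coextend (σ : D.c ≫ q ⟶ q') (τ : D.c ≫ q' ⟶ q'') :
    D.coextend σ ≫ D.coextend τ = D.coextend (D.coextend σ ≫ τ) := by
  rw [← D.coact_comp_whiskerLeft τ, reassoc_of% coextend_comp_coact, ← whiskerLeft_comp,
    coact_comp_whiskerLeft]

lemma coextend_counitAt_of_comp_coact {φ : D.c ≫ q ⟶ D.c ≫ q'}
    (hφ : φ ≫ D.coact q' = D.coact q ≫ D.c ◁ φ) :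
    D.coextend (φ ≫ D.counitAt q') = φ := by
  rw [← coact_comp_whiskerLeft, whiskerLeft_comp, ← reassoc_of% hφ,
    coact_comp_whiskerLeft_counitAt, Category.comp_id]

lemma coextend_associator_inv_comp_whiskerRight {e : 𝒷} (σ : D.c ≫ q ⟶ q') (r : a ⟶ e) :
    D.coextend ((α_ D.c q r).inv ≫ σ ▷ r)
      = (α_ D.c q r).inv ≫ D.coextend σ ▷ r ≫ (α_ D.c q' r).hom := by
  simp only [coextend]; bicategory

end Cmnd

section

variable {q q' : b ⟶ a} {α : D.c ≫ q ⟶ q ≫ C.c} {α' : D.c ≫ q' ⟶ q' ≫ C.c}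

lemma sigmaCond_iff {σ : D.c ≫ q ⟶ q'} :
    SigmaCond D C q q' α α' σ ↔
      D.coextend σ ≫ α' = D.coextend α ≫ (α_ D.c q C.c).inv ≫ σ ▷ C.c := by
  simp only [SigmaCond, Cmnd.coextend, Category.assoc]

lemma isBicomoduleMor_iff {φ : D.c ≫ q ⟶ D.c ≫ q'} :
    IsBicomoduleMor D C q q' α α' φ ↔
      φ ≫ D.coact q' = D.coact q ≫ D.c ◁ φ ∧
      φ ≫ D.coextend α' ≫ (α_ D.c q' C.c).inv
        = D.coextend α ≫ (α_ D.c q C.c).inv ≫ φ ▷ C.c := by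
  simp only [IsBicomoduleMor, Cmnd.coact, Cmnd.coextend, Category.assoc]

lemma isBicomoduleMor_coextend {σ : D.c ≫ q ⟶ q'} (hσ : SigmaCond D C q q' α α' σ) :
    IsBicomoduleMor D C q q' α α' (D.coextend σ) := by
  rw [sigmaCond_iff] at hσ
  refine (isBicomoduleMor_iff D C).2 ⟨D.coextend_comp_coact σ, ?_⟩
  calc D.coextend σ ≫ D.coextend α' ≫ (α_ D.c q' C.c).inv
      = D.coextend (D.coextend α ≫ (α_ D.c q C.c).inv ≫ σ ▷ C.c) ≫
          (α_ D.c q' C.c).inv := by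
        rw [reassoc_of% D.coextend_comp_coextend, hσ]
    _ = D.coextend α ≫ (α_ D.c q C.c).inv ≫ D.coextend σ ▷ C.c := by
        rw [← reassoc_of% D.coextend_comp_coextend,
          D.coextend_associator_inv_comp_whiskerRight]
        simp only [Category.assoc, Iso.hom_inv_id, Category.comp_id]

lemma sigmaCond_comp_counitAt {φ : D.c ≫ q ⟶ D.c ≫ q'}
    (hφ : IsBicomoduleMor D C q q' α α' φ) :
    SigmaCond D C q q' α α' (φ ≫ D.counitAt q') := by
  obtain ⟨hleft, hright⟩ := (isBicomoduleMor_iff D C).1 hφ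
  rw [sigmaCond_iff, D.coextend_counitAt_of_comp_coact hleft, comp_whiskerRight,
    ← reassoc_of% hright, D.associator_inv_comp_counitAt_whiskerRight,
    D.coextend_comp_counitAt]

end

theorem sigma_bijection (q q' : b ⟶ a)
    (α : D.c ≫ q ⟶ q ≫ C.c) (α' : D.c ≫ q' ⟶ q' ≫ C.c) :
    (∀ σ : D.c ≫ q ⟶ q', SigmaCond D C q q' α α' σ →
      IsBicomoduleMor D C q q' α α' (D.Δ' ▷ q ≫ (α_ D.c D.c q).hom ≫ D.c ◁ σ)) ∧
    (∀ φ : D.c ≫ q ⟶ D.c ≫ q', IsBicomoduleMor D C q q' α α' φ →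
      SigmaCond D C q q' α α' (φ ≫ D.ε' ▷ q' ≫ (λ_ q').hom)) ∧
    (∀ σ : D.c ≫ q ⟶ q', SigmaCond D C q q' α α' σ →
      (D.Δ' ▷ q ≫ (α_ D.c D.c q).hom ≫ D.c ◁ σ) ≫ D.ε' ▷ q' ≫ (λ_ q').hom = σ) ∧
    (∀ φ : D.c ≫ q ⟶ D.c ≫ q', IsBicomoduleMor D C q q' α α' φ →
      D.Δ' ▷ q ≫ (α_ D.c D.c q).hom ≫ D.c ◁ (φ ≫ D.ε' ▷ q' ≫ (λ_ q').hom) = φ) :=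
  ⟨fun _ hσ => isBicomoduleMor_coextend D C hσ,
    fun _ hφ => sigmaCond_comp_counitAt D C hφ,
    fun σ _ => D.coextend_comp_counitAt σ,
    fun _ hφ => D.coextend_counitAt_of_comp_coact hφ.1⟩
end

section
/- Let 𝔠 = (A, c, Δ_c, ε_c) be a comonad in a 2-category, (m, ρ^m) a right 𝔠-comodule of Ω-type and (n, λ^n) a left 𝔠-comodule of B-type, and suppose the cotensor product m □^c n (the equalizer of ρ^m ▷ n and m ◁ λ^n) exists in Hom(Ω, B). If ρ^m : m ⟶ m ∘ c has a left inverse in the category of right 𝔠-comodules (or λ^n : n ⟶ c ∘ n has a left inverse in the category of left 𝔠-comodules), then the defining equalizer of m □^c n is a contractible (split) equalizer; consequently, for every 1-cell p : B ⟶ Ω′ the canonical map (m □^c n) ∘ p ⟶ m □^c (n ∘ p) is an isomorphism. -/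
open CategoryTheory CategoryTheory.Bicategory CategoryTheory.Limits

universe w v u

variable {𝒷 : Type u} [Bicategory.{w, v} 𝒷]

/-!
If `ρbar` is a retraction of `ρm` by a comodule map, then `t = ρbar ▷ n` retracts `ρm ▷ n`,
and colinearity of `ρbar` together with coassociativity of `lamn` shows that `(m ◁ lamn) ≫ t`
equalizes the pair; symmetrically for a comodule retraction `lambar` of `lamn`. Either way the
equalizer defining `m □^c n` is split, and split equalizers are preserved by every functor, in
particular by whiskering with `p`.
-/

namespace CategoryTheory

variable {C : Type*} [Category C] {W X Y : C} {f g : X ⟶ Y} {ι : W ⟶ X}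

def Limits.Fork.IsLimit.swap {w : ι ≫ f = ι ≫ g} (hlim : IsLimit (Fork.ofι ι w)) :
    IsLimit (Fork.ofι ι w.symm) :=
  Fork.IsLimit.mk' _ fun s =>
    ⟨Fork.IsLimit.lift hlim s.ι s.condition.symm, Fork.IsLimit.lift_ι' hlim _ _,
      fun hm => Fork.IsLimit.hom_ext hlim (hm.trans (Fork.IsLimit.lift_ι' hlim _ _).symm)⟩

noncomputable def IsSplitEqualizer.ofIsLimit {w : ι ≫ f = ι ≫ g} (hlim : IsLimit (Fork.ofι ι w))
    (r : Y ⟶ X) (hr : g ≫ r = 𝟙 X) (hfr : (f ≫ r) ≫ f = (f ≫ r) ≫ g) :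
    IsSplitEqualizer f g ι where
  leftRetraction := Fork.IsLimit.lift hlim (f ≫ r) hfr
  rightRetraction := r
  condition := w
  ι_leftRetraction := Fork.IsLimit.hom_ext hlim <| by
    rw [Category.assoc, Fork.IsLimit.lift_ι', reassoc_of% w, hr]; simp
  bottom_rightRetraction := hr
  top_rightRetraction := (Fork.IsLimit.lift_ι' hlim _ _).symm

end CategoryTheory

theorem whiskerRight_colinear_retraction_equalizes {a b Ω : 𝒷} {c : a ⟶ a} {Δ' : c ⟶ c ≫ c}
    {m : Ω ⟶ a} {ρm : m ⟶ m ≫ c} {ρbar : m ≫ c ⟶ m}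
    (hρbar : ρbar ≫ ρm = (m ◁ Δ' ≫ (α_ m c c).inv) ≫ ρbar ▷ c)
    {n : a ⟶ b} {lamn : n ⟶ c ≫ n}
    (hnco : lamn ≫ Δ' ▷ n ≫ (α_ c c n).hom = lamn ≫ c ◁ lamn) :
    ((m ◁ lamn ≫ (α_ m c n).inv) ≫ ρbar ▷ n) ≫ ρm ▷ n
      = ((m ◁ lamn ≫ (α_ m c n).inv) ≫ ρbar ▷ n) ≫ (m ◁ lamn ≫ (α_ m c n).inv) :=
  calc _ = m ◁ (lamn ≫ Δ' ▷ n ≫ (α_ c c n).hom) ≫ (α_ m c (c ≫ n)).inv ≫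
          ρbar ▷ (c ≫ n) ≫ (α_ m c n).inv := by
        rw [Category.assoc, ← comp_whiskerRight, hρbar]; bicategory
    _ = m ◁ lamn ≫ (α_ m c n).inv ≫ (m ≫ c) ◁ lamn ≫ ρbar ▷ (c ≫ n) ≫ (α_ m c n).inv := by
        rw [hnco]; bicategory
    _ = _ := by rw [whisker_exchange_assoc]; simp

theorem whiskerLeft_colinear_retraction_equalizes {a b Ω : 𝒷} {c : a ⟶ a} {Δ' : c ⟶ c ≫ c}
    {m : Ω ⟶ a} {ρm : m ⟶ m ≫ c}
    (hmco : ρm ≫ ρm ▷ c = ρm ≫ (m ◁ Δ' ≫ (α_ m c c).inv))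
    {n : a ⟶ b} {lamn : n ⟶ c ≫ n} {lambar : c ≫ n ⟶ n}
    (hlambar : lambar ≫ lamn = (Δ' ▷ n ≫ (α_ c c n).hom) ≫ c ◁ lambar) :
    (ρm ▷ n ≫ (α_ m c n).hom ≫ m ◁ lambar) ≫ ρm ▷ n
      = (ρm ▷ n ≫ (α_ m c n).hom ≫ m ◁ lambar) ≫ (m ◁ lamn ≫ (α_ m c n).inv) :=
  calc _ = ρm ▷ n ≫ (α_ m c n).hom ≫ ρm ▷ (c ≫ n) ≫ (m ≫ c) ◁ lambar := by
        rw [← whisker_exchange]; simp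
    _ = (ρm ≫ m ◁ Δ' ≫ (α_ m c c).inv) ▷ n ≫ (α_ (m ≫ c) c n).hom ≫ (m ≫ c) ◁ lambar := by
        rw [← hmco]; bicategory
    _ = ρm ▷ n ≫ (α_ m c n).hom ≫ m ◁ (lambar ≫ lamn) ≫ (α_ m c n).inv := by
        rw [hlambar]; bicategory
    _ = _ := by simp

theorem cotensor_split_of_coaction_split_inverse_general {a b : 𝒷} (Ω : 𝒷) (C : Cmnd a)
    (m : Ω ⟶ a) (ρm : m ⟶ m ≫ C.c)
    (hmco : ρm ≫ ρm ▷ C.c = ρm ≫ (m ◁ C.Δ' ≫ (α_ m C.c C.c).inv))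
    (n : a ⟶ b) (lamn : n ⟶ C.c ≫ n)
    (hnco : lamn ≫ C.Δ' ▷ n ≫ (α_ C.c C.c n).hom = lamn ≫ C.c ◁ lamn)
    (hsplit :
      (∃ ρbar : m ≫ C.c ⟶ m, ρm ≫ ρbar = 𝟙 m ∧
        ρbar ≫ ρm = (m ◁ C.Δ' ≫ (α_ m C.c C.c).inv) ≫ ρbar ▷ C.c) ∨
      (∃ lambar : C.c ≫ n ⟶ n, lamn ≫ lambar = 𝟙 n ∧
        lambar ≫ lamn = (C.Δ' ▷ n ≫ (α_ C.c C.c n).hom) ≫ C.c ◁ lambar))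
    (e : Ω ⟶ b) (ι : e ⟶ m ≫ n)
    (w : ι ≫ ρm ▷ n = ι ≫ (m ◁ lamn ≫ (α_ m C.c n).inv))
    (hlim : IsLimit (Fork.ofι ι w)) :
    (∃ (u : m ≫ n ⟶ e) (t : (m ≫ C.c) ≫ n ⟶ m ≫ n),
      ι ≫ u = 𝟙 e ∧
      ((ρm ▷ n ≫ t = 𝟙 (m ≫ n) ∧ (m ◁ lamn ≫ (α_ m C.c n).inv) ≫ t = u ≫ ι) ∨
        ((m ◁ lamn ≫ (α_ m C.c n).inv) ≫ t = 𝟙 (m ≫ n) ∧ ρm ▷ n ≫ t = u ≫ ι))) ∧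
    (∀ {Ω' : 𝒷} (p : b ⟶ Ω')
      (w' : ι ▷ p ≫ (ρm ▷ n) ▷ p = ι ▷ p ≫ (m ◁ lamn ≫ (α_ m C.c n).inv) ▷ p),
      Nonempty (IsLimit (Fork.ofι (ι ▷ p) w'))) := by
  rcases hsplit with ⟨ρbar, hρbar, hρbar_colinear⟩ | ⟨lambar, hlambar, hlambar_colinear⟩
  · have hretract : ρm ▷ n ≫ ρbar ▷ n = 𝟙 (m ≫ n) := by
      rw [← comp_whiskerRight, hρbar, id_whiskerRight]
    let s := IsSplitEqualizer.ofIsLimit (Fork.IsLimit.swap hlim) (ρbar ▷ n) hretract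
      (whiskerRight_colinear_retraction_equalizes hρbar_colinear hnco).symm
    exact ⟨⟨s.leftRetraction, s.rightRetraction, s.ι_leftRetraction,
      .inl ⟨s.bottom_rightRetraction, s.top_rightRetraction⟩⟩,
      fun p _ => ⟨Fork.IsLimit.swap (s.map (postcomp Ω p)).isEqualizer⟩⟩
  · have hretract :
        (m ◁ lamn ≫ (α_ m C.c n).inv) ≫ (α_ m C.c n).hom ≫ m ◁ lambar = 𝟙 (m ≫ n) := by
      simp [← whiskerLeft_comp, hlambar]
    let s := IsSplitEqualizer.ofIsLimit hlim ((α_ m C.c n).hom ≫ m ◁ lambar) hretract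
      (whiskerLeft_colinear_retraction_equalizes hmco hlambar_colinear)
    exact ⟨⟨s.leftRetraction, s.rightRetraction, s.ι_leftRetraction,
      .inr ⟨s.bottom_rightRetraction, s.top_rightRetraction⟩⟩,
      fun p _ => ⟨(s.map (postcomp Ω p)).isEqualizer⟩⟩

/-- Let `C = (a, c, Δ, ε)` be a comonad, `(m, ρm)` a right `C`-comodule of `Ω`-type and
`(n, lamn)` a left `C`-comodule of `b`-type, and suppose `(e, ι)` is the equalizer of
the pair `(ρm ▷ n, m ◁ lamn)` defining the cotensor product `m □^c n` in `Hom(Ω, b)`.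
If `ρm` has a left inverse in the category of right `C`-comodules, or `lamn` has a left
inverse in the category of left `C`-comodules, then this equalizer is contractible
(split), and consequently for every 1-cell `p : b ⟶ Ω'` the whiskered fork is again
an equalizer, i.e. the canonical map `(m □^c n) ≫ p ⟶ m □^c (n ≫ p)` is an
isomorphism. -/
theorem cotensor_split_of_coaction_split_inverse {a b : 𝒷} (Ω : 𝒷) (C : Cmnd a)
    (m : Ω ⟶ a) (ρm : m ⟶ m ≫ C.c)
    (hmco : ρm ≫ ρm ▷ C.c = ρm ≫ (m ◁ C.Δ' ≫ (α_ m C.c C.c).inv))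
    (hmcu : ρm ≫ m ◁ C.ε' ≫ (ρ_ m).hom = 𝟙 m)
    (n : a ⟶ b) (lamn : n ⟶ C.c ≫ n)
    (hnco : lamn ≫ C.Δ' ▷ n ≫ (α_ C.c C.c n).hom = lamn ≫ C.c ◁ lamn)
    (hncu : lamn ≫ C.ε' ▷ n ≫ (λ_ n).hom = 𝟙 n)
    (hsplit :
      (∃ ρbar : m ≫ C.c ⟶ m, ρm ≫ ρbar = 𝟙 m ∧
        ρbar ≫ ρm = (m ◁ C.Δ' ≫ (α_ m C.c C.c).inv) ≫ ρbar ▷ C.c) ∨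
      (∃ lambar : C.c ≫ n ⟶ n, lamn ≫ lambar = 𝟙 n ∧
        lambar ≫ lamn = (C.Δ' ▷ n ≫ (α_ C.c C.c n).hom) ≫ C.c ◁ lambar))
    (e : Ω ⟶ b) (ι : e ⟶ m ≫ n)
    (w : ι ≫ ρm ▷ n = ι ≫ (m ◁ lamn ≫ (α_ m C.c n).inv))
    (hlim : IsLimit (Fork.ofι ι w)) :
    (∃ (u : m ≫ n ⟶ e) (t : (m ≫ C.c) ≫ n ⟶ m ≫ n),
      ι ≫ u = 𝟙 e ∧
      ((ρm ▷ n ≫ t = 𝟙 (m ≫ n) ∧ (m ◁ lamn ≫ (α_ m C.c n).inv) ≫ t = u ≫ ι) ∨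
        ((m ◁ lamn ≫ (α_ m C.c n).inv) ≫ t = 𝟙 (m ≫ n) ∧ ρm ▷ n ≫ t = u ≫ ι))) ∧
    (∀ {Ω' : 𝒷} (p : b ⟶ Ω')
      (w' : ι ▷ p ≫ (ρm ▷ n) ▷ p = ι ▷ p ≫ (m ◁ lamn ≫ (α_ m C.c n).inv) ▷ p),
      Nonempty (IsLimit (Fork.ofι (ι ▷ p) w'))) :=
  cotensor_split_of_coaction_split_inverse_general Ω C m ρm hmco n lamn hnco hsplit e ι w hlim
end
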